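/- arXiv:2304.01407 — 3 statements merged into one kernel-verified Lean document; each statement's English description precedes it below -/
import Mathlib

section
/- For every integer p ≥ 1, the set F_p = { m·2^e : m, e ∈ ℤ, |m| < 2^p } is a closed subset of ℝ. -/
/-- The set of precision-`p` binary floating-point numbers with unbounded exponent
range: `F_p = { m·2^e : m, e ∈ ℤ, |m| < 2^p }`. -/
def Fp (p : ℕ) : Set ℝ :=
  {x : ℝ | ∃ m e : ℤ, |m| < 2 ^ p ∧ x = (m : ℝ) * 2 ^ e}

private lemma isClosed_multiples (c : ℝ) (hc : c ≠ 0) :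
    IsClosed {y : ℝ | ∃ n : ℤ, y = (n : ℝ) * c} := by
  have h : {y : ℝ | ∃ n : ℤ, y = (n : ℝ) * c} =
      (fun y : ℝ => y / c) ⁻¹' (Set.range ((↑) : ℤ → ℝ)) := by
    ext y
    simp only [Set.mem_setOf_eq, Set.mem_preimage, Set.mem_range]
    constructor
    · rintro ⟨n, rfl⟩; exact ⟨n, by field_simp⟩
    · rintro ⟨n, hn⟩; exact ⟨n, by field_simp at hn; linarith⟩
  rw [h]
  exact Int.isClosedEmbedding_coe_real.isClosed_range.preimage
    (continuous_id.div_const c)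

/-- For every integer `p ≥ 1` the set `F_p` is a closed subset of `ℝ`. -/
theorem Fp_isClosed (p : ℕ) (hp : 1 ≤ p) : IsClosed (Fp p) := by
  rw [← closure_subset_iff_isClosed]
  intro x hx
  rcases eq_or_ne x 0 with rfl | hx0
  · exact ⟨0, 0, by positivity, by simp⟩
  · -- pick k with 2^k < |x| ≤ 2^(k+1)
    obtain ⟨k, hk1, hk2⟩ := exists_mem_Ioc_zpow (abs_pos.mpr hx0) (one_lt_two (α := ℝ))
    set c : ℝ := (2 : ℝ) ^ (k + 1 - (p : ℤ)) with hc
    have hcpos : (0 : ℝ) < c := by positivity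
    set A : Set ℝ := {y : ℝ | ∃ n : ℤ, y = (n : ℝ) * c} with hA
    set B : Set ℝ := {y : ℝ | |y| ≤ 2 ^ k} with hB
    have hBclosed : IsClosed B := isClosed_le (continuous_abs) continuous_const
    have hAclosed : IsClosed A := isClosed_multiples c hcpos.ne'
    have hsub : Fp p ⊆ A ∪ B := by
      rintro y ⟨m, e, hm, rfl⟩
      by_cases hy : |(m : ℝ) * 2 ^ e| ≤ 2 ^ k
      · exact Or.inr hy
      · left
        push_neg at hy
        have hmR : |(m : ℝ)| < 2 ^ (p : ℤ) := by
          rw [← Int.cast_abs, zpow_natCast]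
          exact_mod_cast hm
        have hyb : |(m : ℝ) * 2 ^ e| < 2 ^ (e + (p : ℤ)) := by
          rw [abs_mul, abs_of_pos (by positivity : (0:ℝ) < 2 ^ e), zpow_add₀ (by norm_num : (2:ℝ) ≠ 0)]
          calc |(m : ℝ)| * 2 ^ e < 2 ^ (p : ℤ) * 2 ^ e :=
                mul_lt_mul_of_pos_right hmR (by positivity)
            _ = 2 ^ e * 2 ^ (p : ℤ) := mul_comm _ _
        have hke : k < e + (p : ℤ) := by
          have := hy.trans hyb
          exact_mod_cast (zpow_lt_zpow_iff_right₀ (by norm_num : (1:ℝ) < 2)).mp this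
        have hle : k + 1 - (p : ℤ) ≤ e := by omega
        refine ⟨m * 2 ^ (e - (k + 1 - (p : ℤ))).toNat, ?_⟩
        push_cast
        rw [hc, mul_assoc, ← zpow_natCast (2:ℝ), ← zpow_add₀ (by norm_num : (2:ℝ) ≠ 0)]
        congr 1
        rw [Int.toNat_of_nonneg (by omega)]
        ring_nf
    have hxAB : x ∈ A ∪ B := closure_minimal hsub (hAclosed.union hBclosed) hx
    have hxB : x ∉ B := not_le.mpr hk1
    obtain ⟨n, hn⟩ := hxAB.resolve_right hxB
    -- |n| * c = |x| ≤ 2^(k+1), so |n| ≤ 2^p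
    have hnb : |(n : ℝ)| ≤ 2 ^ (p : ℤ) := by
      have h1 : |(n : ℝ)| * c ≤ 2 ^ (k + 1) := by
        rw [← abs_of_pos hcpos, ← abs_mul, ← hn]; exact hk2
      have h2 : (2 : ℝ) ^ (k + 1) = 2 ^ (p : ℤ) * c := by
        rw [hc, ← zpow_add₀ (by norm_num : (2:ℝ) ≠ 0)]; ring_nf
      rw [h2] at h1
      exact le_of_mul_le_mul_right h1 hcpos
    have hnZ : |n| ≤ 2 ^ p := by
      have : ((|n| : ℤ) : ℝ) ≤ ((2 ^ p : ℤ) : ℝ) := by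
        push_cast [← Int.cast_abs] at hnb ⊢
        rw [← zpow_natCast (2:ℝ)]
        exact_mod_cast hnb
      exact_mod_cast this
    rcases lt_or_eq_of_le hnZ with hlt | heq
    · exact ⟨n, k + 1 - (p : ℤ), hlt, hn⟩
    · -- |n| = 2^p, so x = ±2^(k+1), representable with m = ±1
      have h1p : (1 : ℤ) < 2 ^ p := one_lt_pow₀ one_lt_two (by omega)
      rcases (abs_eq (by positivity : (0:ℤ) ≤ 2 ^ p)).mp heq with h | h
      · refine ⟨1, k + 1, by simpa using h1p, ?_⟩
        rw [hn, h, hc]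
        push_cast
        rw [← zpow_natCast (2:ℝ) p, ← zpow_add₀ (by norm_num : (2:ℝ) ≠ 0)]
        ring_nf
      · refine ⟨-1, k + 1, by simpa using h1p, ?_⟩
        rw [hn, h, hc]
        push_cast
        rw [neg_mul, neg_mul, ← zpow_natCast (2:ℝ) p, ← zpow_add₀ (by norm_num : (2:ℝ) ≠ 0)]
        ring_nf
end

section
/- The modified two-operand adder with precision growth is monotone: let p ≥ 1 be an integer, let a > 0 be real, let t = 2^(⌊log₂ a⌋ + 1), and define the Class IV adder output flr(s) = RD_p(s) if s < t and flr(s) = RD_{p+1}(s) if s ≥ t, for s ≥ 0. Then for all reals b, c with 0 ≤ b ≤ c ≤ a, flr(a + b) ≤ flr(a + c); consequently also RD_p(flr(a + b)) ≤ RD_p(flr(a + c)) after the final rounding to precision p. -/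
/-- Round-toward-negative in precision `p`: `RD_p x = sup { z ∈ F_p : z ≤ x }`. -/
noncomputable def RD (p : ℕ) (x : ℝ) : ℝ :=
  sSup {z : ℝ | z ∈ Fp p ∧ z ≤ x}

/-- The Class IV two-operand adder output with precision growth at the threshold
`t`: results below `t` are rounded in precision `p`, results at or above `t` are
rounded in precision `p + 1`. -/
noncomputable def classIV (p : ℕ) (t s : ℝ) : ℝ :=
  if s < t then RD p s else RD (p + 1) s

lemma zero_mem_Fp (p : ℕ) : (0 : ℝ) ∈ Fp p := by
  refine ⟨0, 0, ?_, by simp⟩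
  simpa using pow_pos (by norm_num : (0:ℤ) < 2) p

lemma Fp_mono {p q : ℕ} (h : p ≤ q) : Fp p ⊆ Fp q := by
  rintro x ⟨m, e, hm, rfl⟩
  exact ⟨m, e, lt_of_lt_of_le hm (pow_le_pow_right₀ (by norm_num) h), rfl⟩

lemma RD_mono {p q : ℕ} (hpq : p ≤ q) {x y : ℝ} (hx : 0 ≤ x) (hxy : x ≤ y) :
    RD p x ≤ RD q y := by
  apply csSup_le_csSup
  · exact ⟨y, fun z hz => hz.2⟩
  · exact ⟨0, zero_mem_Fp p, hx⟩
  · rintro z ⟨hz1, hz2⟩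
    exact ⟨Fp_mono hpq hz1, hz2.trans hxy⟩

lemma RD_nonneg (p : ℕ) {x : ℝ} (hx : 0 ≤ x) : 0 ≤ RD p x :=
  le_csSup ⟨x, fun z hz => hz.2⟩ ⟨zero_mem_Fp p, hx⟩

/-- The modified two-operand adder with precision growth is monotone: with
`a > 0`, `t = 2^(⌊log₂ a⌋ + 1)`, and `0 ≤ b ≤ c ≤ a`, one has
`flr (a + b) ≤ flr (a + c)`, and also after the final rounding back to
precision `p`. -/
theorem classIV_two_operand_monotone (p : ℕ) (hp : 1 ≤ p) (a : ℝ) (ha : 0 < a)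
    (t : ℝ) (ht : t = (2 : ℝ) ^ (Int.log 2 a + 1))
    (b c : ℝ) (hb : 0 ≤ b) (hbc : b ≤ c) (hca : c ≤ a) :
    classIV p t (a + b) ≤ classIV p t (a + c) ∧
    RD p (classIV p t (a + b)) ≤ RD p (classIV p t (a + c)) := by
  have hab : (0:ℝ) ≤ a + b := by linarith
  have hac : a + b ≤ a + c := by linarith
  have h1 : classIV p t (a + b) ≤ classIV p t (a + c) := by
    unfold classIV
    split_ifs with h2 h3 h3
    · exact RD_mono le_rfl hab hac
    · exact RD_mono (Nat.le_succ p) hab hac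
    · exact absurd (lt_of_le_of_lt hac h3) h2
    · exact RD_mono le_rfl hab hac
  have hnn : 0 ≤ classIV p t (a + b) := by
    unfold classIV; split_ifs
    · exact RD_nonneg p hab
    · exact RD_nonneg (p + 1) hab
  exact ⟨h1, RD_mono le_rfl hnn h1⟩
end

section
/- Three-term Class IV addition without final rounding is non-monotonic, and a final rounding to the starting precision restores monotonicity: let p ≥ 1 and e be integers, and set b = 2^e, ε = 2^(e−p), a = b − ε (so a < b). Then (i) the all-precision-p chain gives RD_p(RD_p(b + ε) + ε) = b; (ii) because a + ε = b = 2^e reaches the power of two, the precision-grown chain gives RD_{p+1}(RD_{p+1}(a + ε) + ε) = b + ε > b, so decreasing the first addend from b to a strictly increases the computed three-term sum; and (iii) RD_p(b + ε) = b, so after the final rounding to precision p both chains evaluate to b. -/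
lemma RD_of_mem {p : ℕ} {x : ℝ} (hx : x ∈ Fp p) : RD p x = x := by
  apply le_antisymm
  · exact csSup_le ⟨x, hx, le_refl x⟩ (fun z hz => hz.2)
  · exact le_csSup ⟨x, fun z hz => hz.2⟩ ⟨hx, le_refl x⟩

lemma two_pow_mul (p : ℕ) (e : ℤ) : (2:ℝ)^(p:ℤ) * 2^(e-(p:ℤ)) = 2^e := by
  rw [← zpow_add₀ (two_ne_zero)]; congr 1; ring

lemma pow_mem_Fp {p : ℕ} (hp : 1 ≤ p) (e : ℤ) : (2:ℝ)^e ∈ Fp p := by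
  refine ⟨1, e, ?_, by norm_num⟩
  have : (1:ℤ) < 2^p := by
    calc (1:ℤ) < 2^1 := by norm_num
    _ ≤ 2^p := pow_le_pow_right₀ one_le_two hp
  simpa using this

lemma RD_key (p : ℕ) (hp : 1 ≤ p) (e : ℤ) :
    RD p ((2:ℝ)^e + 2^(e - (p:ℤ))) = 2^e := by
  have hεpos : (0:ℝ) < 2^(e-(p:ℤ)) := by positivity
  have hub : ∀ z ∈ {z : ℝ | z ∈ Fp p ∧ z ≤ (2:ℝ)^e + 2^(e-(p:ℤ))}, z ≤ (2:ℝ)^e := by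
    rintro z ⟨⟨m, f, hm, rfl⟩, hle⟩
    rcases le_or_gt m 0 with hm0 | hm0
    · have : (m:ℝ) * 2^f ≤ 0 := by
        apply mul_nonpos_of_nonpos_of_nonneg
        · exact_mod_cast hm0
        · positivity
      calc (m:ℝ) * 2^f ≤ 0 := this
        _ ≤ 2^e := by positivity
    rcases le_or_gt f (e - (p:ℤ)) with hf | hf
    · have h1 : (m:ℝ) ≤ 2^p - 1 := by
        have : m ≤ 2^p - 1 := by
          have := (abs_lt.mp hm).2; omega
        calc (m:ℝ) ≤ ((2^p - 1 : ℤ) : ℝ) := by exact_mod_cast this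
          _ = 2^p - 1 := by push_cast; ring
      have h2 : (2:ℝ)^f ≤ 2^(e-(p:ℤ)) := by
        exact zpow_le_zpow_right₀ one_le_two hf
      calc (m:ℝ) * 2^f ≤ (2^p - 1) * 2^(e-(p:ℤ)) := by
            apply mul_le_mul h1 h2 (by positivity)
            have : (0:ℝ) < (m:ℝ) := by exact_mod_cast hm0
            linarith
        _ = (2:ℝ)^(p:ℤ) * 2^(e-(p:ℤ)) - 2^(e-(p:ℤ)) := by
            rw [zpow_natCast]; ring
        _ = 2^e - 2^(e-(p:ℤ)) := by rw [two_pow_mul]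
        _ ≤ 2^e := by linarith
    · -- f > e - p
      obtain ⟨d, hd1, hfd⟩ : ∃ d : ℕ, 1 ≤ d ∧ f = (e - (p:ℤ)) + d :=
        ⟨(f - (e - (p:ℤ))).toNat, by omega, by omega⟩
      have hz : (m:ℝ) * 2^f = ((m * 2^d : ℤ) : ℝ) * 2^(e-(p:ℤ)) := by
        rw [hfd, zpow_add₀ (two_ne_zero)]
        push_cast
        rw [zpow_natCast]
        ring
      have hcast : ((m * 2^d : ℤ) : ℝ) ≤ ((2^p + 1 : ℤ) : ℝ) := by
        have hrhs : (2:ℝ)^e + 2^(e-(p:ℤ)) = ((2^p + 1 : ℤ):ℝ) * 2^(e-(p:ℤ)) := by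
          push_cast
          rw [← zpow_natCast (2:ℝ) p, add_mul, two_pow_mul, one_mul]
        rw [hz, hrhs] at hle
        exact le_of_mul_le_mul_right hle hεpos
      have hint : m * 2^d ≤ 2^p + 1 := by exact_mod_cast hcast
      have hint2 : m * 2^d ≤ 2^p := by
        obtain ⟨d', rfl⟩ : ∃ d', d = d' + 1 := ⟨d - 1, by omega⟩
        obtain ⟨p', rfl⟩ : ∃ p', p = p' + 1 := ⟨p - 1, by omega⟩
        rw [pow_succ, pow_succ] at hint ⊢
        have hk : m * 2^d' < 2^p' + 1 := by
          have h2 : 2*(m*2^d') < 2*(2^p'+1) := by linarith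
          exact lt_of_mul_lt_mul_left h2 (by norm_num)
        linarith
      calc (m:ℝ) * 2^f = ((m * 2^d : ℤ) : ℝ) * 2^(e-(p:ℤ)) := hz
        _ ≤ ((2^p : ℤ):ℝ) * 2^(e-(p:ℤ)) := by
            apply mul_le_mul_of_nonneg_right _ (le_of_lt hεpos)
            exact_mod_cast hint2
        _ = 2^e := by push_cast; rw [← zpow_natCast (2:ℝ) p, two_pow_mul]
  apply le_antisymm
  · exact csSup_le ⟨(2:ℝ)^e, pow_mem_Fp hp e, by linarith⟩ hub
  · exact le_csSup ⟨(2:ℝ)^e, hub⟩ ⟨pow_mem_Fp hp e, by linarith⟩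

/-- Three-term Class IV addition without the final rounding is non-monotonic, and
the final rounding to the starting precision restores monotonicity: with
`b = 2^e`, `ε = 2^(e−p)`, `a = b − ε`, (i) the all-precision-`p` chain gives `b`;
(ii) the precision-grown chain starting from `a < b` gives `b + ε > b`, so
decreasing the first addend strictly increases the computed sum; (iii)
`RD_p (b + ε) = b`, so after the final rounding both chains evaluate to `b`. -/
theorem classIV_three_term (p : ℕ) (hp : 1 ≤ p) (e : ℤ)
    (b ε a : ℝ) (hb : b = (2 : ℝ) ^ e) (hε : ε = (2 : ℝ) ^ (e - (p : ℤ)))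
    (ha : a = b - ε) :
    RD p (RD p (b + ε) + ε) = b ∧
    RD (p + 1) (RD (p + 1) (a + ε) + ε) = b + ε ∧
    a < b ∧
    b < b + ε ∧
    RD p (b + ε) = b := by
  subst hb hε ha
  have hεpos : (0:ℝ) < 2^(e-(p:ℤ)) := by positivity
  have hkey := RD_key p hp e
  have hbmem : (2:ℝ)^e ∈ Fp (p+1) := pow_mem_Fp (by omega) e
  have hbε : (2:ℝ)^e + 2^(e-(p:ℤ)) ∈ Fp (p+1) := by
    refine ⟨2^p + 1, e - (p:ℤ), ?_, ?_⟩
    · have h1 : (1:ℤ) < 2^p := by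
        calc (1:ℤ) < 2^1 := by norm_num
        _ ≤ 2^p := pow_le_pow_right₀ one_le_two hp
      have : (2:ℤ)^(p+1) = 2 * 2^p := by ring
      rw [abs_of_pos (by positivity), this]
      omega
    · push_cast
      rw [add_mul, one_mul, ← zpow_natCast (2:ℝ) p, two_pow_mul]
  refine ⟨?_, ?_, by linarith, by linarith, hkey⟩
  · rw [hkey, hkey]
  · have h1 : (2:ℝ)^e - 2^(e-(p:ℤ)) + 2^(e-(p:ℤ)) = 2^e := by ring
    rw [h1, RD_of_mem hbmem, RD_of_mem hbε]
end
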